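/- For all integers n ≥ 2 and 1 ≤ k ≤ n − 1, the homomorphisms ψ_L and ψ_R form a commuting pair: ψ_L(a)·ψ_R(b) = ψ_R(b)·ψ_L(a) in Ĥ_n for all a ∈ Ĥ_k and b ∈ Ĥ_{n−k}. Consequently, the R-linear map ψ_{k,n−k} : Ĥ_k ⊗_R Ĥ_{n−k} → Ĥ_n determined by a ⊗ b ↦ ψ_L(a)·ψ_R(b) is a homomorphism of unital R-algebras. -/
import Mathlib


/-!
Statement 6: existence and uniqueness of the parabolic embeddings `ψ_L` and `ψ_R`
for extended affine Hecke algebras.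
-/

noncomputable section

namespace ParabolicInduction

/-- The ground ring `R = ℤ[q, q⁻¹]`. -/
abbrev R : Type := LaurentPolynomial ℤ

/-- The element `q ∈ R`. -/
def qR : R := LaurentPolynomial.T 1

/-- The element `q⁻¹ ∈ R`. -/
def qRinv : R := LaurentPolynomial.T (-1)

/-- Generators of the extended affine Hecke algebra `Ĥ_n`:  the `T_i` (present only
when `2 ≤ n`) and `ρ`, `ρ⁻¹`.  For `n = 1` only `ρ^{±1}` remain, so that `Ĥ_1` is the
Laurent polynomial algebra `R[ρ, ρ⁻¹]`. -/
inductive HGen (n : ℕ) : Type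
  | T (i : Fin n) (h : 2 ≤ n) : HGen n
  | rho : HGen n
  | rhoInv : HGen n

/-- Cyclic successor `i ↦ i + 1 (mod n)` on `Fin n`. -/
def cyc {n : ℕ} (i : Fin n) : Fin n := ⟨((i : ℕ) + 1) % n, Nat.mod_lt _ i.pos⟩

/-- The defining relations of the extended affine Hecke algebra `Ĥ_n`. -/
inductive HRel (n : ℕ) : FreeAlgebra R (HGen n) → FreeAlgebra R (HGen n) → Prop
  | quad (i : Fin n) (h : 2 ≤ n) :
      HRel n ((FreeAlgebra.ι R (HGen.T i h) + algebraMap R _ qR) *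
        (FreeAlgebra.ι R (HGen.T i h) - algebraMap R _ qRinv)) 0
  | comm (i j : Fin n) (h : 2 < n)
      (h1 : ((i : ℕ) : ZMod n) - ((j : ℕ) : ZMod n) ≠ 1)
      (h2 : ((i : ℕ) : ZMod n) - ((j : ℕ) : ZMod n) ≠ -1) :
      HRel n (FreeAlgebra.ι R (HGen.T i h.le) * FreeAlgebra.ι R (HGen.T j h.le))
        (FreeAlgebra.ι R (HGen.T j h.le) * FreeAlgebra.ι R (HGen.T i h.le))
  | braid (i : Fin n) (h : 2 < n) :
      HRel n
        (FreeAlgebra.ι R (HGen.T i h.le) * FreeAlgebra.ι R (HGen.T (cyc i) h.le) *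
          FreeAlgebra.ι R (HGen.T i h.le))
        (FreeAlgebra.ι R (HGen.T (cyc i) h.le) * FreeAlgebra.ι R (HGen.T i h.le) *
          FreeAlgebra.ι R (HGen.T (cyc i) h.le))
  | rho_rhoInv : HRel n (FreeAlgebra.ι R HGen.rho * FreeAlgebra.ι R HGen.rhoInv) 1
  | rhoInv_rho : HRel n (FreeAlgebra.ι R HGen.rhoInv * FreeAlgebra.ι R HGen.rho) 1
  | conj (i : Fin n) (h : 2 ≤ n) :
      HRel n
        (FreeAlgebra.ι R HGen.rho * FreeAlgebra.ι R (HGen.T i h) * FreeAlgebra.ι R HGen.rhoInv)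
        (FreeAlgebra.ι R (HGen.T (cyc i) h))

/-- The extended affine Hecke algebra `Ĥ_n`, presented by generators and relations. -/
abbrev Hecke (n : ℕ) : Type := RingQuot (HRel n)

/-- The generator `T_i` of `Ĥ_n` (indices read modulo `n`). -/
def HT {n : ℕ} (h : 2 ≤ n) (i : ℕ) : Hecke n :=
  RingQuot.mkAlgHom R (HRel n)
    (FreeAlgebra.ι R (HGen.T ⟨i % n, Nat.mod_lt _ (by omega)⟩ h))

/-- The generator `ρ` of `Ĥ_n`. -/
def Hrho (n : ℕ) : Hecke n := RingQuot.mkAlgHom R (HRel n) (FreeAlgebra.ι R HGen.rho)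

/-- The generator `ρ⁻¹` of `Ĥ_n`. -/
def HrhoInv (n : ℕ) : Hecke n := RingQuot.mkAlgHom R (HRel n) (FreeAlgebra.ι R HGen.rhoInv)

/-- The element `T_i⁻¹ = T_i + q - q⁻¹` of `Ĥ_n`. -/
def HTinv {n : ℕ} (h : 2 ≤ n) (i : ℕ) : Hecke n :=
  HT h i + algebraMap R (Hecke n) (qR - qRinv)

/-- The descending ordered product `T_a T_{a-1} ⋯ T_b` (empty, i.e. `1`, if `b > a`). -/
def Tdesc {n : ℕ} (h : 2 ≤ n) (a b : ℕ) : Hecke n :=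
  (((List.range' b (a + 1 - b)).reverse).map (HT h)).prod

/-- The ascending ordered product `T_a T_{a+1} ⋯ T_b` (empty, i.e. `1`, if `b < a`). -/
def Tasc {n : ℕ} (h : 2 ≤ n) (a b : ℕ) : Hecke n :=
  ((List.range' a (b + 1 - a)).map (HT h)).prod

/-- The descending ordered product `T_a⁻¹ T_{a-1}⁻¹ ⋯ T_b⁻¹` (empty if `b > a`). -/
def TinvDesc {n : ℕ} (h : 2 ≤ n) (a b : ℕ) : Hecke n :=
  (((List.range' b (a + 1 - b)).reverse).map (HTinv h)).prod

/-- The ascending ordered product `T_a⁻¹ T_{a+1}⁻¹ ⋯ T_b⁻¹` (empty if `b < a`). -/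
def TinvAsc {n : ℕ} (h : 2 ≤ n) (a b : ℕ) : Hecke n :=
  ((List.range' a (b + 1 - a)).map (HTinv h)).prod

/-- The defining conditions for the left parabolic embedding `ψ_L : Ĥ_k → Ĥ_n`:
`ψ_L(T_i) = T_i` for `1 ≤ i ≤ k - 1`,
`ψ_L(T_0) = T_k⁻¹ ⋯ T_{n-1}⁻¹ T_0 T_{n-1} ⋯ T_k` (when `2 ≤ k`), and
`ψ_L(ρ) = ρ T_{n-1} ⋯ T_k`. -/
def IsPsiL (n k : ℕ) (hn : 2 ≤ n) (f : Hecke k →ₐ[R] Hecke n) : Prop :=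
  (∀ (hk : 2 ≤ k) (i : ℕ), 1 ≤ i → i ≤ k - 1 → f (HT hk i) = HT hn i) ∧
  (∀ hk : 2 ≤ k, f (HT hk 0) = TinvAsc hn k (n - 1) * HT hn 0 * Tdesc hn (n - 1) k) ∧
  f (Hrho k) = Hrho n * Tdesc hn (n - 1) k

/-- The defining conditions for the right parabolic embedding `ψ_R : Ĥ_m → Ĥ_n`
(where `m = n - k`):
`ψ_R(T_j) = T_{k+j}` for `1 ≤ j ≤ m - 1`,
`ψ_R(T_0) = T_0 T_1 ⋯ T_{k-1} T_k T_{k-1}⁻¹ ⋯ T_1⁻¹ T_0⁻¹` (when `2 ≤ m`), and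
`ψ_R(ρ) = T_k⁻¹ T_{k-1}⁻¹ ⋯ T_1⁻¹ ρ`. -/
def IsPsiR (n k m : ℕ) (hn : 2 ≤ n) (g : Hecke m →ₐ[R] Hecke n) : Prop :=
  (∀ (hm : 2 ≤ m) (j : ℕ), 1 ≤ j → j ≤ m - 1 → g (HT hm j) = HT hn (k + j)) ∧
  (∀ hm : 2 ≤ m, g (HT hm 0) = Tasc hn 0 (k - 1) * HT hn k * TinvDesc hn (k - 1) 0) ∧
  g (Hrho m) = TinvDesc hn k 1 * Hrho n


/-! ### Auxiliary toolbox -/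

section ListProd

variable {M : Type*} [Monoid M] (f : ℕ → M)

/-- Generic descending product. -/
def dPaux (a b : ℕ) : M := (((List.range' b (a + 1 - b)).reverse).map f).prod

/-- Generic ascending product. -/
def aPaux (a b : ℕ) : M := ((List.range' a (b + 1 - a)).map f).prod

lemma dPaux_nil {a b : ℕ} (h : a < b) : dPaux f a b = 1 := by
  have : a + 1 - b = 0 := by omega
  simp [dPaux, this]

lemma dPaux_top {a b : ℕ} (h : b ≤ a + 1) : dPaux f (a + 1) b = f (a + 1) * dPaux f a b := by
  have h1 : a + 1 + 1 - b = (a + 1 - b) + 1 := by omega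
  have h2 : b + 1 * (a + 1 - b) = a + 1 := by omega
  rw [dPaux, h1, List.range'_concat, List.reverse_append, h2]
  simp [dPaux]

lemma dPaux_bot {a b : ℕ} (h : b ≤ a) : dPaux f a b = dPaux f a (b + 1) * f b := by
  have h1 : a + 1 - b = (a + 1 - (b + 1)) + 1 := by omega
  rw [dPaux, h1, List.range'_succ]
  simp [dPaux]

lemma dPaux_self (a : ℕ) : dPaux f a a = f a := by
  have : a + 1 - a = 1 := by omega
  simp [dPaux, this]

lemma aPaux_nil {a b : ℕ} (h : b < a) : aPaux f a b = 1 := by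
  have : b + 1 - a = 0 := by omega
  simp [aPaux, this]

lemma aPaux_bot {a b : ℕ} (h : a ≤ b) : aPaux f a b = f a * aPaux f (a + 1) b := by
  have h1 : b + 1 - a = (b + 1 - (a + 1)) + 1 := by omega
  rw [aPaux, h1, List.range'_succ]
  simp [aPaux]

lemma commute_dPaux {x : M} {a b : ℕ} (h : ∀ l, b ≤ l → l ≤ a → Commute x (f l)) :
    Commute x (dPaux f a b) := by
  refine Commute.list_prod_right _ _ ?_
  intro y hy
  simp only [List.mem_map, List.mem_reverse, List.mem_range'_1] at hy
  obtain ⟨l, ⟨hl1, hl2⟩, rfl⟩ := hy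
  exact h l hl1 (by omega)

end ListProd

section HeckeBase

variable {n : ℕ}

lemma qR_mul_qRinv : qR * qRinv = 1 := by
  rw [qR, qRinv, ← LaurentPolynomial.T_add]
  norm_num

lemma HT_congr (h : 2 ≤ n) {i j : ℕ} (hij : i % n = j % n) : HT h i = HT h j := by
  simp only [HT, hij]

lemma HT_fin (h : 2 ≤ n) (i : Fin n) :
    RingQuot.mkAlgHom R (HRel n) (FreeAlgebra.ι R (HGen.T i h)) = HT h i.val := by
  simp [HT, Nat.mod_eq_of_lt i.isLt]

lemma quad_helper {A : Type*} [Ring A] (t a b : A) (h0 : (t + a) * (t - b) = 0)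
    (hc : t * a = a * t) (hc2 : t * b = b * t) (hab : a * b = 1) :
    t * (t + (a - b)) = 1 ∧ (t + (a - b)) * t = 1 := by
  constructor
  · calc t * (t + (a - b))
        = (t + a) * (t - b) + a * b + (t * a - a * t) := by noncomm_ring
      _ = 1 := by rw [h0, zero_add, hab, hc, sub_self, add_zero]
  · calc (t + (a - b)) * t
        = (t + a) * (t - b) + a * b + (t * b - b * t) := by noncomm_ring
      _ = 1 := by rw [h0, zero_add, hab, hc2, sub_self, add_zero]

lemma HT_mul_HTinv (h : 2 ≤ n) (i : ℕ) : HT h i * HTinv h i = 1 := by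
  have key := RingQuot.mkAlgHom_rel R (HRel.quad (n := n) ⟨i % n, Nat.mod_lt _ (by omega)⟩ h)
  rw [map_mul, map_add, map_sub, map_zero, AlgHom.commutes, AlgHom.commutes] at key
  have key2 : (HT h i + algebraMap R (Hecke n) qR) * (HT h i - algebraMap R (Hecke n) qRinv)
      = 0 := key
  have hc : HT h i * algebraMap R (Hecke n) qR = algebraMap R (Hecke n) qR * HT h i :=
    (Algebra.commutes _ _).symm
  have hc2 : HT h i * algebraMap R (Hecke n) qRinv = algebraMap R (Hecke n) qRinv * HT h i :=
    (Algebra.commutes _ _).symm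
  have hab : algebraMap R (Hecke n) qR * algebraMap R (Hecke n) qRinv = 1 := by
    rw [← map_mul, qR_mul_qRinv, map_one]
  show HT h i * (HT h i + algebraMap R (Hecke n) (qR - qRinv)) = 1
  rw [map_sub]
  exact (quad_helper _ _ _ key2 hc hc2 hab).1

lemma HTinv_mul_HT (h : 2 ≤ n) (i : ℕ) : HTinv h i * HT h i = 1 := by
  have key := RingQuot.mkAlgHom_rel R (HRel.quad (n := n) ⟨i % n, Nat.mod_lt _ (by omega)⟩ h)
  rw [map_mul, map_add, map_sub, map_zero, AlgHom.commutes, AlgHom.commutes] at key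
  have key2 : (HT h i + algebraMap R (Hecke n) qR) * (HT h i - algebraMap R (Hecke n) qRinv)
      = 0 := key
  have hc : HT h i * algebraMap R (Hecke n) qR = algebraMap R (Hecke n) qR * HT h i :=
    (Algebra.commutes _ _).symm
  have hc2 : HT h i * algebraMap R (Hecke n) qRinv = algebraMap R (Hecke n) qRinv * HT h i :=
    (Algebra.commutes _ _).symm
  have hab : algebraMap R (Hecke n) qR * algebraMap R (Hecke n) qRinv = 1 := by
    rw [← map_mul, qR_mul_qRinv, map_one]
  show (HT h i + algebraMap R (Hecke n) (qR - qRinv)) * HT h i = 1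
  rw [map_sub]
  exact (quad_helper _ _ _ key2 hc hc2 hab).2

lemma Hrho_mul_HrhoInv (n : ℕ) : Hrho n * HrhoInv n = 1 := by
  have key := RingQuot.mkAlgHom_rel R (HRel.rho_rhoInv (n := n))
  rw [map_mul, map_one] at key
  exact key

lemma HrhoInv_mul_Hrho (n : ℕ) : HrhoInv n * Hrho n = 1 := by
  have key := RingQuot.mkAlgHom_rel R (HRel.rhoInv_rho (n := n))
  rw [map_mul, map_one] at key
  exact key

lemma rho_T_rhoInv (h : 2 ≤ n) (i : ℕ) :
    Hrho n * HT h i * HrhoInv n = HT h (i + 1) := by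
  have key := RingQuot.mkAlgHom_rel R (HRel.conj (n := n) ⟨i % n, Nat.mod_lt _ (by omega)⟩ h)
  rw [map_mul, map_mul] at key
  have hcyc : (cyc (⟨i % n, Nat.mod_lt _ (by omega)⟩ : Fin n))
      = ⟨(i + 1) % n, Nat.mod_lt _ (by omega)⟩ := by
    apply Fin.ext
    simp [cyc, Nat.mod_add_mod]
  rw [hcyc] at key
  exact key

lemma rho_T (h : 2 ≤ n) (i : ℕ) : Hrho n * HT h i = HT h (i + 1) * Hrho n := by
  calc Hrho n * HT h i = Hrho n * HT h i * (HrhoInv n * Hrho n) := by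
        rw [HrhoInv_mul_Hrho, mul_one]
    _ = (Hrho n * HT h i * HrhoInv n) * Hrho n := by simp only [mul_assoc]
    _ = HT h (i + 1) * Hrho n := by rw [rho_T_rhoInv]

lemma rho_Tinv (h : 2 ≤ n) (i : ℕ) : Hrho n * HTinv h i = HTinv h (i + 1) * Hrho n := by
  show Hrho n * (HT h i + algebraMap R (Hecke n) (qR - qRinv))
      = (HT h (i + 1) + algebraMap R (Hecke n) (qR - qRinv)) * Hrho n
  rw [mul_add, add_mul, rho_T h i, Algebra.commutes]

lemma HT_braid (h : 2 ≤ n) (h3 : 2 < n) (i : ℕ) :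
    HT h i * HT h (i + 1) * HT h i = HT h (i + 1) * HT h i * HT h (i + 1) := by
  have key := RingQuot.mkAlgHom_rel R (HRel.braid (n := n) ⟨i % n, Nat.mod_lt _ (by omega)⟩ h3)
  rw [map_mul, map_mul, map_mul, map_mul] at key
  have hcyc : (cyc (⟨i % n, Nat.mod_lt _ (by omega)⟩ : Fin n))
      = ⟨(i + 1) % n, Nat.mod_lt _ (by omega)⟩ := by
    apply Fin.ext
    simp [cyc, Nat.mod_add_mod]
  rw [hcyc] at key
  exact key

lemma HT_comm (h : 2 ≤ n) (h3 : 2 < n) (i j : ℕ) (hi : i < n) (hj : j < n)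
    (h1 : i ≠ j + 1) (h2 : j ≠ i + 1) (h4 : ¬(i = 0 ∧ j = n - 1)) (h5 : ¬(j = 0 ∧ i = n - 1)) :
    Commute (HT h i) (HT h j) := by
  have c1 : ((((i % n : ℕ)) : ZMod n) - ((j % n : ℕ) : ZMod n)) ≠ 1 := by
    rw [Nat.mod_eq_of_lt hi, Nat.mod_eq_of_lt hj]
    intro hc
    have h' : ((i : ℕ) : ZMod n) = ((j + 1 : ℕ) : ZMod n) := by push_cast; linear_combination hc
    rw [ZMod.natCast_eq_natCast_iff'] at h'
    rw [Nat.mod_eq_of_lt hi] at h'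
    rcases Nat.lt_or_ge (j + 1) n with hlt | hge
    · rw [Nat.mod_eq_of_lt hlt] at h'; exact h1 h'
    · have hjn : j + 1 = n := by omega
      rw [hjn, Nat.mod_self] at h'
      exact h4 ⟨h', by omega⟩
  have c2 : ((((i % n : ℕ)) : ZMod n) - ((j % n : ℕ) : ZMod n)) ≠ -1 := by
    rw [Nat.mod_eq_of_lt hi, Nat.mod_eq_of_lt hj]
    intro hc
    have h' : ((j : ℕ) : ZMod n) = ((i + 1 : ℕ) : ZMod n) := by push_cast; linear_combination -hc
    rw [ZMod.natCast_eq_natCast_iff'] at h'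
    rw [Nat.mod_eq_of_lt hj] at h'
    rcases Nat.lt_or_ge (i + 1) n with hlt | hge
    · rw [Nat.mod_eq_of_lt hlt] at h'; exact h2 h'
    · have hin : i + 1 = n := by omega
      rw [hin, Nat.mod_self] at h'
      exact h5 ⟨h', by omega⟩
  have key := RingQuot.mkAlgHom_rel R
    (HRel.comm (n := n) ⟨i % n, Nat.mod_lt _ (by omega)⟩ ⟨j % n, Nat.mod_lt _ (by omega)⟩ h3 c1 c2)
  rw [map_mul, map_mul] at key
  exact key

lemma HT_zero_eq (h : 2 ≤ n) : HT h 0 = Hrho n * HT h (n - 1) * HrhoInv n := by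
  rw [rho_T_rhoInv h (n - 1)]
  apply HT_congr
  have : n - 1 + 1 = n := by omega
  simp [this, Nat.mod_self]

end HeckeBase

section HeckeProducts

variable {n : ℕ}

lemma Tdesc_nil (h : 2 ≤ n) {a b : ℕ} (hab : a < b) : Tdesc h a b = 1 := dPaux_nil (HT h) hab

lemma Tdesc_top (h : 2 ≤ n) {a b : ℕ} (hab : b ≤ a + 1) :
    Tdesc h (a + 1) b = HT h (a + 1) * Tdesc h a b := dPaux_top (HT h) hab

lemma Tdesc_bot (h : 2 ≤ n) {a b : ℕ} (hab : b ≤ a) :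
    Tdesc h a b = Tdesc h a (b + 1) * HT h b := dPaux_bot (HT h) hab

lemma Tdesc_self (h : 2 ≤ n) (a : ℕ) : Tdesc h a a = HT h a := dPaux_self (HT h) a

lemma TinvDesc_nil (h : 2 ≤ n) {a b : ℕ} (hab : a < b) : TinvDesc h a b = 1 :=
  dPaux_nil (HTinv h) hab

lemma TinvDesc_top (h : 2 ≤ n) {a b : ℕ} (hab : b ≤ a + 1) :
    TinvDesc h (a + 1) b = HTinv h (a + 1) * TinvDesc h a b := dPaux_top (HTinv h) hab

lemma TinvDesc_bot (h : 2 ≤ n) {a b : ℕ} (hab : b ≤ a) :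
    TinvDesc h a b = TinvDesc h a (b + 1) * HTinv h b := dPaux_bot (HTinv h) hab

lemma Tasc_nil (h : 2 ≤ n) {a b : ℕ} (hab : b < a) : Tasc h a b = 1 := aPaux_nil (HT h) hab

lemma Tasc_bot (h : 2 ≤ n) {a b : ℕ} (hab : a ≤ b) :
    Tasc h a b = HT h a * Tasc h (a + 1) b := aPaux_bot (HT h) hab

lemma commute_Tdesc (h : 2 ≤ n) {x : Hecke n} {a b : ℕ}
    (hc : ∀ l, b ≤ l → l ≤ a → Commute x (HT h l)) : Commute x (Tdesc h a b) :=
  commute_dPaux (HT h) hc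

lemma commute_TinvDesc (h : 2 ≤ n) {x : Hecke n} {a b : ℕ}
    (hc : ∀ l, b ≤ l → l ≤ a → Commute x (HTinv h l)) : Commute x (TinvDesc h a b) :=
  commute_dPaux (HTinv h) hc

lemma commute_HTinv (h : 2 ≤ n) {x : Hecke n} {i : ℕ} (hc : Commute x (HT h i)) :
    Commute x (HTinv h i) := by
  have : Commute x (algebraMap R (Hecke n) (qR - qRinv)) := (Algebra.commutes _ _).symm
  exact hc.add_right this

/-- Conjugation by `ρ` shifts a descending product. -/
lemma rho_shift_aux (g : ℕ → Hecke n) (hg : ∀ i, Hrho n * g i = g (i + 1) * Hrho n) :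
    ∀ (len b : ℕ), Hrho n * (((List.range' b len).reverse).map g).prod
      = (((List.range' (b + 1) len).reverse).map g).prod * Hrho n := by
  intro len
  induction len with
  | zero => simp
  | succ len IH =>
    intro b
    rw [List.range'_succ, List.range'_succ]
    simp only [List.reverse_cons, List.map_append, List.map_cons, List.map_nil,
      List.prod_append, List.prod_cons, List.prod_nil, mul_one]
    calc Hrho n * ((List.map g (List.range' (b + 1) len).reverse).prod * g b)
        = (Hrho n * (List.map g (List.range' (b + 1) len).reverse).prod) * g b := by
          rw [mul_assoc]
      _ = ((List.map g (List.range' (b + 1 + 1) len).reverse).prod * Hrho n) * g b := by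
          rw [IH (b + 1)]
      _ = (List.map g (List.range' (b + 1 + 1) len).reverse).prod * (Hrho n * g b) := by
          rw [mul_assoc]
      _ = (List.map g (List.range' (b + 1 + 1) len).reverse).prod * (g (b + 1) * Hrho n) := by
          rw [hg b]
      _ = (List.map g (List.range' (b + 1 + 1) len).reverse).prod * g (b + 1) * Hrho n := by
          rw [mul_assoc]

lemma rho_Tdesc (h : 2 ≤ n) (a b : ℕ) :
    Hrho n * Tdesc h a b = Tdesc h (a + 1) (b + 1) * Hrho n := by
  have h2 : (a + 1) + 1 - (b + 1) = a + 1 - b := by omega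
  have := rho_shift_aux (HT h) (rho_T h) (a + 1 - b) b
  show Hrho n * (((List.range' b (a + 1 - b)).reverse).map (HT h)).prod
    = (((List.range' (b + 1) ((a + 1) + 1 - (b + 1))).reverse).map (HT h)).prod * Hrho n
  rw [h2]
  exact this

lemma rho_TinvDesc (h : 2 ≤ n) (a b : ℕ) :
    Hrho n * TinvDesc h a b = TinvDesc h (a + 1) (b + 1) * Hrho n := by
  have h2 : (a + 1) + 1 - (b + 1) = a + 1 - b := by omega
  have := rho_shift_aux (HTinv h) (rho_Tinv h) (a + 1 - b) b
  show Hrho n * (((List.range' b (a + 1 - b)).reverse).map (HTinv h)).prod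
    = (((List.range' (b + 1) ((a + 1) + 1 - (b + 1))).reverse).map (HTinv h)).prod * Hrho n
  rw [h2]
  exact this

end HeckeProducts

section HeckeMoving

variable {n : ℕ}

lemma commute_Tasc (h : 2 ≤ n) {x : Hecke n} {a b : ℕ}
    (hc : ∀ l, a ≤ l → l ≤ b → Commute x (HT h l)) : Commute x (Tasc h a b) := by
  refine Commute.list_prod_right _ _ ?_
  intro y hy
  simp only [List.mem_map, List.mem_range'_1] at hy
  obtain ⟨l, ⟨hl1, hl2⟩, rfl⟩ := hy
  exact hc l hl1 (by omega)

/-- Moving lemma: `T_j (T_a ⋯ T_b) = (T_a ⋯ T_b) T_{j+1}` for `b ≤ j < a`. -/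
lemma move_desc (h : 2 ≤ n) (b j : ℕ) : ∀ a, (1 ≤ b ∨ a ≤ n - 2) → b ≤ j → j < a → a ≤ n - 1 →
    HT h j * Tdesc h a b = Tdesc h a b * HT h (j + 1) := by
  intro a
  induction a using Nat.strong_induction_on with
  | _ a IH =>
    intro hb hj1 hj2 ha
    obtain ⟨a', rfl⟩ : ∃ a', a = a' + 1 := ⟨a - 1, by omega⟩
    by_cases hja : j = a'
    · subst hja
      by_cases h0 : j = 0
      · subst h0
        have hb0 : b = 0 := by omega
        subst hb0
        rw [Tdesc_top h (by omega), Tdesc_self]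
        rw [← mul_assoc]
        exact HT_braid h (by omega) 0
      · obtain ⟨a'', rfl⟩ : ∃ a'', j = a'' + 1 := ⟨j - 1, by omega⟩
        rw [Tdesc_top h (by omega), Tdesc_top h (by omega)]
        have hcomm : Commute (HT h (a'' + 1 + 1)) (Tdesc h a'' b) := by
          refine commute_Tdesc h ?_
          intro l hl1 hl2
          exact HT_comm h (by omega) _ l (by omega) (by omega) (by omega) (by omega)
            (by omega) (by omega)
        have hbr := HT_braid h (by omega) (a'' + 1)
        simp only [← mul_assoc]
        rw [hbr, mul_assoc (HT h (a'' + 1 + 1) * HT h (a'' + 1)),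
          mul_assoc (HT h (a'' + 1 + 1) * HT h (a'' + 1)), hcomm.eq]
    · have hc : Commute (HT h j) (HT h (a' + 1)) :=
        HT_comm h (by omega) j (a' + 1) (by omega) (by omega) (by omega) (by omega)
          (by omega) (by omega)
      have IH' := IH a' (by omega) (Or.inr (by omega)) hj1 (by omega) (by omega)
      rw [Tdesc_top h (by omega), ← mul_assoc, hc.eq, mul_assoc, IH', ← mul_assoc]

/-- Moving lemma: `T_{j+1} (T_a ⋯ T_b) = (T_a ⋯ T_b) T_j` for `a ≤ j < b` (ascending). -/
lemma move_asc_aux (h : 2 ≤ n) (b j : ℕ) (hbn : b ≤ n - 1) (hj2 : j < b) :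
    ∀ d a, j - a = d → a ≤ j → (1 ≤ a ∨ b ≤ n - 2) →
      HT h (j + 1) * Tasc h a b = Tasc h a b * HT h j := by
  intro d
  induction d with
  | zero =>
    intro a hd ha hb
    have haj : a = j := by omega
    subst haj
    rw [Tasc_bot h (by omega), Tasc_bot h (by omega)]
    have hcomm : Commute (HT h a) (Tasc h (a + 1 + 1) b) := by
      refine commute_Tasc h ?_
      intro l hl1 hl2
      exact HT_comm h (by omega) a l (by omega) (by omega) (by omega) (by omega)
        (by omega) (by omega)
    have hbr := HT_braid h (by omega) a
    simp only [← mul_assoc]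
    rw [← hbr, mul_assoc (HT h a * HT h (a + 1)), mul_assoc (HT h a * HT h (a + 1)), hcomm.eq]
  | succ d IH =>
    intro a hd ha hb
    have hc : Commute (HT h (j + 1)) (HT h a) :=
      HT_comm h (by omega) (j + 1) a (by omega) (by omega) (by omega) (by omega)
        (by omega) (by omega)
    have IH' := IH (a + 1) (by omega) (by omega) (Or.inl (by omega))
    rw [Tasc_bot h (by omega), ← mul_assoc, hc.eq, mul_assoc, IH', ← mul_assoc]

lemma move_asc (h : 2 ≤ n) (a b j : ℕ) (hb : 1 ≤ a ∨ b ≤ n - 2) (hj1 : a ≤ j) (hj2 : j < b)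
    (hbn : b ≤ n - 1) : HT h (j + 1) * Tasc h a b = Tasc h a b * HT h j :=
  move_asc_aux h b j hbn hj2 (j - a) a rfl hj1 hb

lemma asc_mul_invDesc (h : 2 ≤ n) : ∀ d a b, b + 1 - a = d →
    Tasc h a b * TinvDesc h b a = 1 := by
  intro d
  induction d with
  | zero =>
    intro a b hd
    rw [Tasc_nil h (by omega), TinvDesc_nil h (by omega), one_mul]
  | succ d IH =>
    intro a b hd
    have hab : a ≤ b := by omega
    rw [Tasc_bot h hab, TinvDesc_bot h hab]
    calc HT h a * Tasc h (a + 1) b * (TinvDesc h b (a + 1) * HTinv h a)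
        = HT h a * (Tasc h (a + 1) b * TinvDesc h b (a + 1)) * HTinv h a := by
          simp only [mul_assoc]
      _ = 1 := by rw [IH (a + 1) b (by omega), mul_one, HT_mul_HTinv]

lemma invDesc_mul_asc (h : 2 ≤ n) : ∀ d a b, b + 1 - a = d →
    TinvDesc h b a * Tasc h a b = 1 := by
  intro d
  induction d with
  | zero =>
    intro a b hd
    rw [Tasc_nil h (by omega), TinvDesc_nil h (by omega), one_mul]
  | succ d IH =>
    intro a b hd
    have hab : a ≤ b := by omega
    rw [Tasc_bot h hab, TinvDesc_bot h hab]
    calc TinvDesc h b (a + 1) * HTinv h a * (HT h a * Tasc h (a + 1) b)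
        = TinvDesc h b (a + 1) * (HTinv h a * HT h a) * Tasc h (a + 1) b := by
          simp only [mul_assoc]
      _ = TinvDesc h b (a + 1) * Tasc h (a + 1) b := by rw [HTinv_mul_HT, mul_one]
      _ = 1 := IH (a + 1) b (by omega)

/-- Moving lemma for descending products of inverses. -/
lemma move_invDesc (h : 2 ≤ n) (a b j : ℕ) (hb : 1 ≤ a ∨ b ≤ n - 2) (hj1 : a ≤ j)
    (hj2 : j < b) (hbn : b ≤ n - 1) :
    TinvDesc h b a * HT h (j + 1) = HT h j * TinvDesc h b a := by
  have c3 : Tasc h a b * TinvDesc h b a = 1 := asc_mul_invDesc h (b + 1 - a) a b rfl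
  have c4 : TinvDesc h b a * Tasc h a b = 1 := invDesc_mul_asc h (b + 1 - a) a b rfl
  have m2 := move_asc h a b j hb hj1 hj2 hbn
  calc TinvDesc h b a * HT h (j + 1)
      = TinvDesc h b a * HT h (j + 1) * (Tasc h a b * TinvDesc h b a) := by rw [c3, mul_one]
    _ = TinvDesc h b a * (HT h (j + 1) * Tasc h a b) * TinvDesc h b a := by
        simp only [mul_assoc]
    _ = TinvDesc h b a * (Tasc h a b * HT h j) * TinvDesc h b a := by rw [m2]
    _ = (TinvDesc h b a * Tasc h a b) * (HT h j * TinvDesc h b a) := by simp only [mul_assoc]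
    _ = HT h j * TinvDesc h b a := by rw [c4, one_mul]

end HeckeMoving

section PQ

variable {n : ℕ}

/-- The images of `ρ` under `ψ_L` and `ψ_R` commute. -/
lemma PQ_comm (hn : 2 ≤ n) (k : ℕ) (hk1 : 1 ≤ k) (hk2 : k ≤ n - 1) :
    Commute (Hrho n * Tdesc hn (n - 1) k) (TinvDesc hn k 1 * Hrho n) := by
  obtain ⟨k', rfl⟩ : ∃ k', k = k' + 1 := ⟨k - 1, by omega⟩
  show Hrho n * Tdesc hn (n - 1) (k' + 1) * (TinvDesc hn (k' + 1) 1 * Hrho n)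
      = TinvDesc hn (k' + 1) 1 * Hrho n * (Hrho n * Tdesc hn (n - 1) (k' + 1))
  have hDI : Tdesc hn (n - 1) (k' + 1) * TinvDesc hn (k' + 1) 1
      = Tdesc hn (n - 1) (k' + 1 + 1) * TinvDesc hn k' 1 := by
    rw [Tdesc_bot hn (show k' + 1 ≤ n - 1 by omega), TinvDesc_top hn (show 1 ≤ k' + 1 by omega)]
    calc Tdesc hn (n - 1) (k' + 1 + 1) * HT hn (k' + 1) * (HTinv hn (k' + 1) * TinvDesc hn k' 1)
        = Tdesc hn (n - 1) (k' + 1 + 1) * (HT hn (k' + 1) * HTinv hn (k' + 1))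
            * TinvDesc hn k' 1 := by simp only [mul_assoc]
      _ = Tdesc hn (n - 1) (k' + 1 + 1) * TinvDesc hn k' 1 := by rw [HT_mul_HTinv, mul_one]
  have hswap : Commute (TinvDesc hn k' 1) (Tdesc hn (n - 1) (k' + 1 + 1)) := by
    refine commute_Tdesc hn ?_
    intro l hl1 hl2
    refine (commute_TinvDesc hn ?_).symm
    intro l' hl1' hl2'
    refine commute_HTinv hn ?_
    exact HT_comm hn (by omega) l l' (by omega) (by omega) (by omega) (by omega)
      (by omega) (by omega)
  have lhs_eq : Hrho n * Tdesc hn (n - 1) (k' + 1) * (TinvDesc hn (k' + 1) 1 * Hrho n)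
      = TinvDesc hn (k' + 1) (1 + 1)
          * (Tdesc hn (n - 1 + 1) (k' + 1 + 1 + 1) * (Hrho n * Hrho n)) := by
    calc Hrho n * Tdesc hn (n - 1) (k' + 1) * (TinvDesc hn (k' + 1) 1 * Hrho n)
        = Hrho n * (Tdesc hn (n - 1) (k' + 1) * TinvDesc hn (k' + 1) 1) * Hrho n := by
          simp only [mul_assoc]
      _ = Hrho n * (Tdesc hn (n - 1) (k' + 1 + 1) * TinvDesc hn k' 1) * Hrho n := by rw [hDI]
      _ = Hrho n * (TinvDesc hn k' 1 * Tdesc hn (n - 1) (k' + 1 + 1)) * Hrho n := by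
          rw [← hswap.eq]
      _ = (Hrho n * TinvDesc hn k' 1) * (Tdesc hn (n - 1) (k' + 1 + 1) * Hrho n) := by
          simp only [mul_assoc]
      _ = (TinvDesc hn (k' + 1) (1 + 1) * Hrho n)
            * (Tdesc hn (n - 1) (k' + 1 + 1) * Hrho n) := by rw [rho_TinvDesc]
      _ = TinvDesc hn (k' + 1) (1 + 1)
            * ((Hrho n * Tdesc hn (n - 1) (k' + 1 + 1)) * Hrho n) := by simp only [mul_assoc]
      _ = TinvDesc hn (k' + 1) (1 + 1)
            * ((Tdesc hn (n - 1 + 1) (k' + 1 + 1 + 1) * Hrho n) * Hrho n) := by rw [rho_Tdesc]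
      _ = TinvDesc hn (k' + 1) (1 + 1)
            * (Tdesc hn (n - 1 + 1) (k' + 1 + 1 + 1) * (Hrho n * Hrho n)) := by
          simp only [mul_assoc]
  have rhs_eq : TinvDesc hn (k' + 1) 1 * Hrho n * (Hrho n * Tdesc hn (n - 1) (k' + 1))
      = TinvDesc hn (k' + 1) 1
          * (Tdesc hn (n - 1 + 1 + 1) (k' + 1 + 1 + 1) * (Hrho n * Hrho n)) := by
    calc TinvDesc hn (k' + 1) 1 * Hrho n * (Hrho n * Tdesc hn (n - 1) (k' + 1))
        = TinvDesc hn (k' + 1) 1 * (Hrho n * (Hrho n * Tdesc hn (n - 1) (k' + 1))) := by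
          simp only [mul_assoc]
      _ = TinvDesc hn (k' + 1) 1
            * (Hrho n * (Tdesc hn (n - 1 + 1) (k' + 1 + 1) * Hrho n)) := by rw [rho_Tdesc]
      _ = TinvDesc hn (k' + 1) 1
            * ((Hrho n * Tdesc hn (n - 1 + 1) (k' + 1 + 1)) * Hrho n) := by
          simp only [mul_assoc]
      _ = TinvDesc hn (k' + 1) 1
            * ((Tdesc hn (n - 1 + 1 + 1) (k' + 1 + 1 + 1) * Hrho n) * Hrho n) := by
          rw [rho_Tdesc]
      _ = TinvDesc hn (k' + 1) 1
            * (Tdesc hn (n - 1 + 1 + 1) (k' + 1 + 1 + 1) * (Hrho n * Hrho n)) := by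
          simp only [mul_assoc]
  rw [lhs_eq, rhs_eq]
  -- Final identity between the two normal forms.
  have hI2 : TinvDesc hn (k' + 1) 1 = TinvDesc hn (k' + 1) (1 + 1) * HTinv hn 1 :=
    TinvDesc_bot hn (by omega)
  have hD2 : Tdesc hn (n - 1 + 1 + 1) (k' + 1 + 1 + 1)
      = HT hn (n - 1 + 1 + 1) * Tdesc hn (n - 1 + 1) (k' + 1 + 1 + 1) := by
    have : n - 1 + 1 + 1 = (n - 1 + 1) + 1 := by omega
    rw [this]
    exact Tdesc_top hn (by omega)
  have hHT : HT hn (n - 1 + 1 + 1) = HT hn 1 := by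
    apply HT_congr
    have h1 : n - 1 + 1 + 1 = 1 + n := by omega
    rw [h1, Nat.add_mod_right]
  rw [hI2, hD2, hHT]
  calc TinvDesc hn (k' + 1) (1 + 1)
        * (Tdesc hn (n - 1 + 1) (k' + 1 + 1 + 1) * (Hrho n * Hrho n))
      = TinvDesc hn (k' + 1) (1 + 1) * (HTinv hn 1 * HT hn 1)
          * (Tdesc hn (n - 1 + 1) (k' + 1 + 1 + 1) * (Hrho n * Hrho n)) := by
        rw [HTinv_mul_HT, mul_one]
    _ = TinvDesc hn (k' + 1) (1 + 1) * HTinv hn 1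
          * (HT hn 1 * Tdesc hn (n - 1 + 1) (k' + 1 + 1 + 1) * (Hrho n * Hrho n)) := by
        simp only [mul_assoc]

end PQ

section Reduction

lemma commute_of_inv {M : Type*} [Monoid M] {x y z : M} (h : Commute x y) (h1 : y * z = 1)
    (h2 : z * y = 1) : Commute x z := by
  show x * z = z * x
  calc x * z = z * y * x * z := by rw [h2, one_mul]
    _ = z * (y * x) * z := by rw [mul_assoc z y x]
    _ = z * (x * y) * z := by rw [← h.eq]
    _ = z * x * (y * z) := by simp only [mul_assoc]
    _ = z * x := by rw [h1, mul_one]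

/-- Reduction: to commute with everything in the image of `ψ_R` it is enough to commute
with the images of the generators `T_j` (`1 ≤ j ≤ m-1`) and `ρ`. -/
lemma commute_psiR {n k : ℕ} (hn : 2 ≤ n)
    (ψR : Hecke (n - k) →ₐ[R] Hecke n) (hψR : IsPsiR n k (n - k) hn ψR)
    (x : Hecke n)
    (hT : ∀ (hm : 2 ≤ n - k) (j : ℕ), 1 ≤ j → j ≤ n - k - 1 → Commute x (HT hn (k + j)))
    (hrho : Commute x (ψR (Hrho (n - k)))) :
    ∀ b, Commute x (ψR b) := by
  obtain ⟨h1, -, -⟩ := hψR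
  have hinv1 : ψR (Hrho (n - k)) * ψR (HrhoInv (n - k)) = 1 := by
    rw [← map_mul, Hrho_mul_HrhoInv, map_one]
  have hinv2 : ψR (HrhoInv (n - k)) * ψR (Hrho (n - k)) = 1 := by
    rw [← map_mul, HrhoInv_mul_Hrho, map_one]
  have hrho' : Commute x (ψR (HrhoInv (n - k))) := commute_of_inv hrho hinv1 hinv2
  intro b
  obtain ⟨c, rfl⟩ := RingQuot.mkAlgHom_surjective R (HRel (n - k)) b
  induction c using FreeAlgebra.induction with
  | grade0 r =>
    rw [AlgHom.commutes, AlgHom.commutes]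
    exact (Algebra.commutes r x).symm
  | grade1 g =>
    cases g with
    | T i hm =>
      rw [HT_fin hm i]
      rcases Nat.eq_zero_or_pos i.val with h0 | hpos
      · rw [h0, HT_zero_eq hm, map_mul, map_mul]
        have ht : Commute x (ψR (HT hm (n - k - 1))) := by
          rw [h1 hm (n - k - 1) (by omega) le_rfl]
          exact hT hm (n - k - 1) (by omega) le_rfl
        exact (hrho.mul_right ht).mul_right hrho'
      · have hi2 : i.val ≤ n - k - 1 := by
          have := i.isLt
          omega
        rw [h1 hm i.val hpos hi2]
        exact hT hm i.val hpos hi2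
    | rho => exact hrho
    | rhoInv => exact hrho'
  | mul c1 c2 hc1 hc2 =>
    rw [map_mul, map_mul]
    exact hc1.mul_right hc2
  | add c1 c2 hc1 hc2 =>
    rw [map_add, map_add]
    exact hc1.add_right hc2

end Reduction
open scoped TensorProduct

/-- **Statement 7.**  `ψ_L` and `ψ_R` form a commuting pair of algebra homomorphisms,
and the `R`-linear map `Ĥ_k ⊗_R Ĥ_{n-k} → Ĥ_n`, `a ⊗ b ↦ ψ_L(a)·ψ_R(b)`, is a
homomorphism of unital `R`-algebras. -/
theorem statement_7 (n k : ℕ) (hn : 2 ≤ n) (hk1 : 1 ≤ k) (hk2 : k ≤ n - 1)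
    (ψL : Hecke k →ₐ[R] Hecke n) (hψL : IsPsiL n k hn ψL)
    (ψR : Hecke (n - k) →ₐ[R] Hecke n) (hψR : IsPsiR n k (n - k) hn ψR) :
    (∀ (a : Hecke k) (b : Hecke (n - k)), ψL a * ψR b = ψR b * ψL a) ∧
    ∃ Ψ : (Hecke k ⊗[R] Hecke (n - k)) →ₐ[R] Hecke n,
      ∀ (a : Hecke k) (b : Hecke (n - k)), Ψ (a ⊗ₜ[R] b) = ψL a * ψR b := by
  have hψL1 := hψL.1
  have hψL3 := hψL.2.2
  have hψR3 := hψR.2.2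
  have hmain : ∀ a b, Commute (ψL a) (ψR b) := by
    -- `T_i`, `1 ≤ i ≤ k-1`, commutes with the image of `ψ_R`
    have hTi : ∀ (hk : 2 ≤ k) (i : ℕ), 1 ≤ i → i ≤ k - 1 →
        ∀ b, Commute (HT hn i) (ψR b) := by
      intro hk i hi1 hi2
      refine commute_psiR hn ψR hψR _ ?_ ?_
      · intro hm2 j hj1 hj2
        exact HT_comm hn (by omega) i (k + j) (by omega) (by omega) (by omega) (by omega)
          (by omega) (by omega)
      · rw [hψR3]
        have e := move_invDesc hn 1 k i (Or.inl le_rfl) hi1 (by omega) (by omega)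
        show HT hn i * (TinvDesc hn k 1 * Hrho n) = (TinvDesc hn k 1 * Hrho n) * HT hn i
        calc HT hn i * (TinvDesc hn k 1 * Hrho n)
            = (HT hn i * TinvDesc hn k 1) * Hrho n := by rw [mul_assoc]
          _ = (TinvDesc hn k 1 * HT hn (i + 1)) * Hrho n := by rw [e]
          _ = TinvDesc hn k 1 * (HT hn (i + 1) * Hrho n) := by rw [mul_assoc]
          _ = TinvDesc hn k 1 * (Hrho n * HT hn i) := by rw [← rho_T hn i]
          _ = (TinvDesc hn k 1 * Hrho n) * HT hn i := by rw [mul_assoc]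
    -- `ψ_L(ρ)` commutes with the image of `ψ_R`
    have hP : ∀ b, Commute (Hrho n * Tdesc hn (n - 1) k) (ψR b) := by
      refine commute_psiR hn ψR hψR _ ?_ ?_
      · intro hm2 j hj1 hj2
        have m1 := move_desc hn k (k + j - 1) (n - 1) (Or.inl hk1) (by omega) (by omega) le_rfl
        have hrw : k + j - 1 + 1 = k + j := by omega
        rw [hrw] at m1
        show (Hrho n * Tdesc hn (n - 1) k) * HT hn (k + j)
            = HT hn (k + j) * (Hrho n * Tdesc hn (n - 1) k)
        calc (Hrho n * Tdesc hn (n - 1) k) * HT hn (k + j)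
            = Hrho n * (Tdesc hn (n - 1) k * HT hn (k + j)) := by rw [mul_assoc]
          _ = Hrho n * (HT hn (k + j - 1) * Tdesc hn (n - 1) k) := by rw [← m1]
          _ = (Hrho n * HT hn (k + j - 1)) * Tdesc hn (n - 1) k := by rw [mul_assoc]
          _ = (HT hn (k + j) * Hrho n) * Tdesc hn (n - 1) k := by
              rw [rho_T hn (k + j - 1), hrw]
          _ = HT hn (k + j) * (Hrho n * Tdesc hn (n - 1) k) := by simp only [mul_assoc]
      · rw [hψR3]
        exact PQ_comm hn k hk1 hk2
    -- `ψ_L(ρ⁻¹)` commutes with the image of `ψ_R`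
    have hPinv : ∀ b, Commute (ψL (HrhoInv k)) (ψR b) := by
      intro b
      have e1 : ψL (Hrho k) * ψL (HrhoInv k) = 1 := by
        rw [← map_mul, Hrho_mul_HrhoInv, map_one]
      have e2 : ψL (HrhoInv k) * ψL (Hrho k) = 1 := by
        rw [← map_mul, HrhoInv_mul_Hrho, map_one]
      have h3 : Commute (ψR b) (ψL (Hrho k)) := by
        rw [hψL3]
        exact (hP b).symm
      exact (commute_of_inv h3 e1 e2).symm
    intro a
    obtain ⟨c, rfl⟩ := RingQuot.mkAlgHom_surjective R (HRel k) a
    induction c using FreeAlgebra.induction with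
    | grade0 r =>
      intro b
      rw [AlgHom.commutes, AlgHom.commutes]
      exact Algebra.commutes r (ψR b)
    | grade1 g =>
      intro b
      cases g with
      | T i hk =>
        rw [HT_fin hk i]
        rcases Nat.eq_zero_or_pos i.val with h0 | hpos
        · rw [h0, HT_zero_eq hk, map_mul, map_mul]
          have f1 : Commute (ψL (Hrho k)) (ψR b) := by
            rw [hψL3]
            exact hP b
          have f2 : Commute (ψL (HT hk (k - 1))) (ψR b) := by
            rw [hψL1 hk (k - 1) (by omega) le_rfl]
            exact hTi hk (k - 1) (by omega) le_rfl b
          exact (f1.mul_left f2).mul_left (hPinv b)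
        · have hi2 : i.val ≤ k - 1 := by
            have := i.isLt
            omega
          rw [hψL1 hk i.val hpos hi2]
          exact hTi hk i.val hpos hi2 b
      | rho =>
        show Commute (ψL (Hrho k)) (ψR b)
        rw [hψL3]
        exact hP b
      | rhoInv => exact hPinv b
    | mul c1 c2 hc1 hc2 =>
      intro b
      rw [map_mul, map_mul]
      exact (hc1 b).mul_left (hc2 b)
    | add c1 c2 hc1 hc2 =>
      intro b
      rw [map_add, map_add]
      exact (hc1 b).add_left (hc2 b)
  refine ⟨fun a b => (hmain a b).eq, ?_⟩
  exact ⟨Algebra.TensorProduct.lift ψL ψR hmain,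
    fun a b => Algebra.TensorProduct.lift_tmul ψL ψR hmain a b⟩

end ParabolicInduction
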